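/- The law of the excluded middle x ∨ ¬x = 1 has finite satisfiability gap 1/3 among finite bounded commutative BCK-algebras: every such algebra either satisfies it identically or has excluded-middle degree at most 2/3. -/

import Mathlib

/-- A BCK-algebra: an algebra ⟨A; ·, 0⟩ satisfying (BCK1)–(BCK5). -/
class BCK (A : Type*) extends Zero A where
  op : A → A → A
  bck1 : ∀ x y z : A, op (op (op x y) (op x z)) (op z y) = 0
  bck2 : ∀ x y : A, op (op x (op x y)) y = 0
  bck3 : ∀ x : A, op x x = 0
  bck4 : ∀ x : A, op 0 x = 0
  bck5 : ∀ x y : A, op x y = 0 → op y x = 0 → x = y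

/-- A bounded BCK-algebra: a BCK-algebra with greatest element 1 (x·1 = 0 for all x). -/
class BoundedBCK (A : Type*) extends BCK A, One A where
  le_one : ∀ x : A, op x 1 = 0

/-!
If some element `a` is not Boolean, then `a ∧ ¬a` is a nonzero element below its own complement,
and so is any atom `c` beneath it. Every element lies above `c` or has its complement above `c`.
On the Boolean elements above `c`, the map `x ↦ x · c` is injective (it is inverted by
`y ↦ ¬(¬y · c)`) and lands among the non-Boolean elements, since `c` lies below both `x · c` and
its complement. Conjugating by `¬` handles the other Boolean elements, so there are at most twice
as many Boolean elements as non-Boolean ones.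
-/

namespace BCK

variable {A : Type*}

local infixl:70 " ⬝ " => BCK.op

section Basic

variable [BCK A]

theorem eq_zero_of_op_zero {x : A} (h : x ⬝ 0 = 0) : x = 0 := bck5 x 0 h (bck4 x)

@[simp]
theorem op_zero (x : A) : x ⬝ 0 = x := by
  have h : x ⬝ 0 ⬝ x = 0 := by simpa only [bck3] using bck2 x x
  exact bck5 _ _ h (eq_zero_of_op_zero (bck2 x 0))

instance : PartialOrder A where
  le x y := x ⬝ y = 0
  le_refl := bck3
  le_trans x y z hxy hyz := by simpa only [hxy, hyz, op_zero] using bck1 x z y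
  le_antisymm := bck5

theorem le_def {x y : A} : x ≤ y ↔ x ⬝ y = 0 := Iff.rfl

instance : OrderBot A where
  bot := 0
  bot_le := bck4

theorem le_zero_iff {x : A} : x ≤ 0 ↔ x = 0 := le_bot_iff

theorem op_le_self (x y : A) : x ⬝ y ≤ x :=
  le_def.2 (by simpa only [op_zero, bck4] using bck1 x y 0)

theorem op_op_le (x y : A) : x ⬝ (x ⬝ y) ≤ y := bck2 x y

theorem op_le_op_left {y z : A} (h : y ≤ z) (x : A) : x ⬝ z ≤ x ⬝ y :=
  le_def.2 (by simpa only [le_def.1 h, op_zero] using bck1 x z y)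

theorem op_right_comm (x y z : A) : x ⬝ y ⬝ z = x ⬝ z ⬝ y := by
  have key (a b c : A) : a ⬝ b ⬝ c ≤ a ⬝ c ⬝ b :=
    (op_le_op_left (op_op_le a c) _).trans (bck1 a b (a ⬝ c))
  exact le_antisymm (key x y z) (key x z y)

theorem op_le_op_right {x y : A} (h : x ≤ y) (z : A) : x ⬝ z ≤ y ⬝ z := by
  have h' : x ⬝ z ⬝ (y ⬝ z) ≤ x ⬝ y := by
    rw [le_def, op_right_comm]
    exact bck1 x z y
  rwa [le_def.1 h, le_zero_iff] at h'

end Basic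

/-- Commutativity of a BCK-algebra: `x ∧ y := y · (y · x)` is symmetric. -/
class IsCommutative (A : Type*) [BCK A] : Prop where
  op_op_comm : ∀ x y : A, y ⬝ (y ⬝ x) = x ⬝ (x ⬝ y)

section Commutative

variable [BCK A] [IsCommutative A]

theorem le_op_op {w x y : A} (hx : w ≤ x) (hy : w ≤ y) : w ≤ y ⬝ (y ⬝ x) := by
  have hw : y ⬝ (y ⬝ w) = w := by rw [IsCommutative.op_op_comm w y, le_def.1 hy, op_zero]
  simpa only [hw] using op_le_op_left (op_le_op_left hx y) y

end Commutative

section Bounded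

variable [BoundedBCK A]

instance : OrderTop A where
  top := 1
  le_top := BoundedBCK.le_one

instance : Compl A := ⟨fun x => 1 ⬝ x⟩

theorem compl_def (x : A) : xᶜ = 1 ⬝ x := rfl

theorem compl_le_compl {x y : A} (h : x ≤ y) : yᶜ ≤ xᶜ := op_le_op_left h 1

theorem op_le_compl (x y : A) : x ⬝ y ≤ yᶜ := op_le_op_right le_top y

theorem op_compl_le (x y : A) : x ⬝ yᶜ ≤ y := by
  rw [le_def, op_right_comm]
  exact op_le_compl x y

/-- `x` is Boolean when `x ∧ ¬x = 0`. -/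
def IsBoolean (x : A) : Prop := x ⬝ (x ⬝ xᶜ) = 0

theorem exists_isAtom_le_compl_of_not_isBoolean [Finite A] {a : A} (ha : ¬IsBoolean a) :
    ∃ c : A, IsAtom c ∧ c ≤ cᶜ := by
  set c₀ : A := a ⬝ (a ⬝ aᶜ)
  have hc₀ : c₀ ≤ c₀ᶜ := (op_op_le a aᶜ).trans (compl_le_compl (op_le_self a _))
  obtain ⟨c, hc, hcc₀⟩ := (eq_bot_or_exists_atom_le c₀).resolve_left ha
  exact ⟨c, hc, (hcc₀.trans hc₀).trans (compl_le_compl hcc₀)⟩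

end Bounded

section BoundedCommutative

variable [BoundedBCK A] [IsCommutative A]

@[simp]
theorem compl_compl (x : A) : xᶜᶜ = x := by
  show 1 ⬝ (1 ⬝ x) = x
  simpa only [BoundedBCK.le_one x, op_zero] using IsCommutative.op_op_comm x (1 : A)

theorem compl_injective : Function.Injective (compl : A → A) :=
  Function.LeftInverse.injective compl_compl

theorem compl_eq_one_iff {x : A} : xᶜ = 1 ↔ x = 0 := by
  rw [← compl_injective.eq_iff, compl_compl, compl_def, bck3]

theorem le_compl_comm {x y : A} : x ≤ yᶜ ↔ y ≤ xᶜ :=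
  ⟨fun h => compl_compl y ▸ compl_le_compl h, fun h => compl_compl x ▸ compl_le_compl h⟩

theorem compl_op_compl (x y : A) : xᶜ ⬝ yᶜ = y ⬝ x :=
  le_antisymm (bck1 1 x y)
    (le_def.2 (by simpa only [← compl_def, compl_compl] using bck1 1 yᶜ xᶜ))

theorem compl_op_op_of_le {c z : A} (h : c ≤ z) : (z ⬝ c)ᶜ ⬝ c = zᶜ :=
  calc (z ⬝ c)ᶜ ⬝ c = (cᶜ ⬝ zᶜ)ᶜ ⬝ cᶜᶜ := by rw [compl_op_compl c z, compl_compl]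
    _ = cᶜ ⬝ (cᶜ ⬝ zᶜ) := compl_op_compl _ _
    _ = zᶜ := by rw [IsCommutative.op_op_comm, le_def.1 (compl_le_compl h), op_zero]

theorem injOn_op_right (c : A) : Set.InjOn (· ⬝ c) {x | c ≤ x} := by
  intro x hx y hy hxy
  rw [← compl_compl x, ← compl_op_op_of_le hx, ← compl_compl y, ← compl_op_op_of_le hy]
  simp only [hxy]

theorem le_or_le_compl_of_isAtom {c : A} (hc : IsAtom c) (x : A) : c ≤ x ∨ c ≤ xᶜ := by
  rcases hc.le_iff.1 (op_le_self c (c ⬝ x)) with h | h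
  · right
    have h' : c ⬝ xᶜ ≤ c ⬝ (c ⬝ x) := le_op_op (op_compl_le c x) (op_le_self c xᶜ)
    rw [h] at h'
    exact le_bot_iff.1 h'
  · left
    simpa only [h] using op_op_le c x

theorem isBoolean_compl_iff {x : A} : IsBoolean xᶜ ↔ IsBoolean x := by
  rw [IsBoolean, IsBoolean, compl_compl, IsCommutative.op_op_comm x xᶜ]

theorem compl_op_op_compl_eq_one_iff {x : A} : (xᶜᶜ ⬝ (xᶜᶜ ⬝ xᶜ))ᶜ = 1 ↔ IsBoolean x := by
  rw [compl_eq_one_iff, compl_compl, IsBoolean]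

theorem IsBoolean.compl_op_self {x : A} (hx : IsBoolean x) : xᶜ ⬝ x = xᶜ := by
  refine le_antisymm (op_le_self _ _) ?_
  rw [le_def, IsCommutative.op_op_comm x xᶜ]
  exact hx

theorem IsBoolean.eq_zero_of_le_of_le_compl {c x : A} (hx : IsBoolean x) (h : c ≤ x)
    (h' : c ≤ xᶜ) : c = 0 := by
  have hc : c ≤ x ⬝ (x ⬝ xᶜ) := le_op_op h' h
  rwa [hx, le_zero_iff] at hc

theorem IsBoolean.le_op_of_le {c x : A} (hx : IsBoolean x) (hc : c ≤ cᶜ) (hcx : c ≤ x) :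
    c ≤ x ⬝ c := by
  have hcompl : (cᶜ ⬝ c)ᶜ ≤ x := by
    rw [← compl_compl x, ← hx.compl_op_self]
    exact compl_le_compl <|
      (op_le_op_left hcx xᶜ).trans (op_le_op_right (compl_le_compl hcx) c)
  calc c = (cᶜ ⬝ c)ᶜ ⬝ c := by rw [compl_op_op_of_le hc, compl_compl]
    _ ≤ x ⬝ c := op_le_op_right hcompl c

theorem IsBoolean.not_isBoolean_op {c x : A} (hx : IsBoolean x) (hc₀ : c ≠ 0) (hc : c ≤ cᶜ)
    (hcx : c ≤ x) : ¬IsBoolean (x ⬝ c) := fun hxc =>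
  hc₀ (hxc.eq_zero_of_le_of_le_compl (hx.le_op_of_le hc hcx) (le_compl_comm.1 (op_le_compl x c)))

theorem three_mul_card_isBoolean_le [Finite A] {c : A} (hc : IsAtom c) (hcc : c ≤ cᶜ) :
    3 * Nat.card {x : A // IsBoolean x} ≤ 2 * Nat.card A := by
  have hc₀ : c ≠ 0 := hc.ne_bot
  have hle : {x | IsBoolean x ∧ c ≤ x}.ncard ≤ {x : A | IsBoolean x}ᶜ.ncard :=
    Set.ncard_le_ncard_of_injOn (· ⬝ c) (fun x hx => hx.1.not_isBoolean_op hc₀ hcc hx.2)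
      ((injOn_op_right c).mono fun x hx => hx.2)
  have hle_compl : {x | IsBoolean x ∧ c ≤ xᶜ}.ncard ≤ {x : A | IsBoolean x}ᶜ.ncard :=
    Set.ncard_le_ncard_of_injOn (fun x => (xᶜ ⬝ c)ᶜ)
      (fun x hx => isBoolean_compl_iff.not.2
        ((isBoolean_compl_iff.2 hx.1).not_isBoolean_op hc₀ hcc hx.2))
      (fun x hx y hy hxy => compl_injective (injOn_op_right c hx.2 hy.2 (compl_injective hxy)))
  have hcover : {x : A | IsBoolean x}.ncard
      ≤ ({x | IsBoolean x ∧ c ≤ x} ∪ {x | IsBoolean x ∧ c ≤ xᶜ}).ncard :=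
    Set.ncard_le_ncard fun x hx => (le_or_le_compl_of_isAtom hc x).imp (⟨hx, ·⟩) (⟨hx, ·⟩)
  have hunion := Set.ncard_union_le {x | IsBoolean x ∧ c ≤ x} {x | IsBoolean x ∧ c ≤ xᶜ}
  have hsum := Set.ncard_add_ncard_compl {x : A | IsBoolean x}
  have hcoe : Nat.card {x : A // IsBoolean x} = {x : A | IsBoolean x}.ncard :=
    Nat.card_coe_set_eq _
  omega

end BoundedCommutative

end BCK

theorem stmt_11 (A : Type*) [BoundedBCK A] [Fintype A]
    (hcomm : ∀ x y : A, BCK.op y (BCK.op y x) = BCK.op x (BCK.op x y)) :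
    let neg : A → A := fun x => BCK.op 1 x
    let meet : A → A → A := fun a b => BCK.op b (BCK.op b a)
    let join : A → A → A := fun a b => neg (meet (neg a) (neg b))
    (∀ x : A, join x (neg x) = 1) ∨
      ((Nat.card {x : A // join x (neg x) = 1} : ℚ) / (Fintype.card A : ℚ)
        ≤ 2 / 3) := by
  intro neg meet join
  have : BCK.IsCommutative A := ⟨hcomm⟩
  have hjoin (x : A) : join x (neg x) = 1 ↔ BCK.IsBoolean x := BCK.compl_op_op_compl_eq_one_iff
  simp only [hjoin]
  by_cases hall : ∀ x : A, BCK.IsBoolean x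
  · exact Or.inl hall
  right
  obtain ⟨a, ha⟩ := not_forall.1 hall
  obtain ⟨c, hc, hcc⟩ := BCK.exists_isAtom_le_compl_of_not_isBoolean ha
  have hcard : (3 * Nat.card {x : A // BCK.IsBoolean x} : ℚ) ≤ 2 * Fintype.card A := by
    exact_mod_cast Nat.card_eq_fintype_card (α := A) ▸ BCK.three_mul_card_isBoolean_le hc hcc
  rw [div_le_iff₀ (by exact_mod_cast Fintype.card_pos_iff.2 ⟨(0 : A)⟩)]
  linarith
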